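/- For any real m×p matrix A, the principal matrix square root of I_p + AᵀA equals I_p + Aᵀ [I_m + (I_m + AAᵀ)^{1/2}]⁻¹ A. -/

import Mathlib

/-!
With `S = √(1 + AAᵀ)` one has `AAᵀ = (S - 1)(1 + S)`, and `S` commutes with `(1 + S)⁻¹`, so
`(1 + S)⁻¹ AAᵀ (1 + S)⁻¹ = (1 + S)⁻¹ (S - 1)`. Expanding the square of `B = 1 + Aᵀ(1 + S)⁻¹A`
then gives `B² = 1 + Aᵀ(1 + S)⁻¹(1 + S)A = 1 + AᵀA`. Since `B` is positive semidefinite,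
uniqueness of positive semidefinite square roots identifies it with `√(1 + AᵀA)`.
-/

open Matrix

open scoped ComplexOrder in
/-- The positive semidefinite square root of a positive semidefinite matrix
(the definition `Matrix.PosSemidef.sqrt` of the older Mathlib, removed since). -/
noncomputable def Matrix.PosSemidef.sqrt {n : Type*} [Fintype n] [DecidableEq n]
    {𝕜 : Type*} [RCLike 𝕜] {A : Matrix n n 𝕜} (hA : A.PosSemidef) : Matrix n n 𝕜 :=
  hA.1.eigenvectorUnitary.1 * diagonal ((↑) ∘ (√·) ∘ hA.1.eigenvalues) *
  (star hA.1.eigenvectorUnitary : Matrix n n 𝕜)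

open scoped MatrixOrder ComplexOrder

namespace Matrix.PosSemidef

variable {n 𝕜 : Type*} [Fintype n] [DecidableEq n] [RCLike 𝕜] {A : Matrix n n 𝕜}

theorem sqrt_eq_cfcSqrt (hA : A.PosSemidef) : hA.sqrt = CFC.sqrt A := by
  rw [CFC.sqrt_eq_real_sqrt A hA.nonneg, cfcₙ_eq_cfc, hA.1.cfc_eq]
  simp [IsHermitian.cfc, Matrix.PosSemidef.sqrt, Unitary.conjStarAlgAut_apply]

theorem posSemidef_sqrt (hA : A.PosSemidef) : hA.sqrt.PosSemidef := by
  rw [sqrt_eq_cfcSqrt]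
  exact (CFC.sqrt_nonneg A).posSemidef

theorem sqrt_mul_self (hA : A.PosSemidef) : hA.sqrt * hA.sqrt = A := by
  rw [sqrt_eq_cfcSqrt]
  exact CFC.sqrt_mul_sqrt_self A hA.nonneg

theorem eq_sqrt_of_sq_eq {B : Matrix n n 𝕜} (hB : B.PosSemidef) (hA : A.PosSemidef)
    (h : B ^ 2 = A) : B = hA.sqrt := by
  rw [sqrt_eq_cfcSqrt, ← h, CFC.sqrt_sq B hB.nonneg]

end Matrix.PosSemidef

theorem Matrix.sq_one_add_mul_inv_one_add_mul {m n R : Type*} [Fintype m] [Fintype n]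
    [DecidableEq m] [DecidableEq n] [CommRing R] {A : Matrix m n R} {B : Matrix n m R}
    {S : Matrix m m R} (hS : S * S = 1 + A * B) (hdet : IsUnit (1 + S).det) :
    (1 + B * (1 + S)⁻¹ * A) ^ 2 = 1 + B * A := by
  set M := (1 + S)⁻¹
  have hMS : M * (1 + S) = 1 := nonsing_inv_mul _ hdet
  have hSM : (1 + S) * M = 1 := mul_nonsing_inv _ hdet
  have hAB : A * B = (S - 1) * (1 + S) := by
    rw [eq_sub_of_add_eq' hS.symm]
    noncomm_ring
  have hMABM : M * (A * B) * M = M * (S - 1) := by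
    calc M * (A * B) * M = M * (S - 1) * ((1 + S) * M) := by
          simp only [hAB, Matrix.mul_assoc]
      _ = M * (S - 1) := by rw [hSM, Matrix.mul_one]
  calc (1 + B * M * A) ^ 2 = 1 + B * (M + M + M * (A * B) * M) * A := by
        simp only [sq, Matrix.add_mul, Matrix.mul_add, Matrix.one_mul, Matrix.mul_one,
          Matrix.mul_assoc]
        abel
    _ = 1 + B * (M * (1 + S)) * A := by
        rw [hMABM, show M + M + M * (S - 1) = M * (1 + S) by noncomm_ring]
    _ = 1 + B * A := by rw [hMS, Matrix.mul_one]

/-- Woodbury-like identity for the matrix square root: for any real `m × p` matrix `A`,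
the principal square root of `I_p + AᵀA` equals
`I_p + Aᵀ [I_m + (I_m + AAᵀ)^{1/2}]⁻¹ A`. -/
theorem sqrt_one_add_transpose_mul (m p : ℕ) (A : Matrix (Fin m) (Fin p) ℝ)
    (h1 : (1 + Aᵀ * A).PosSemidef) (h2 : (1 + A * Aᵀ).PosSemidef) :
    h1.sqrt = 1 + Aᵀ * (1 + h2.sqrt)⁻¹ * A := by
  have hpd : (1 + h2.sqrt).PosDef := PosDef.one.add_posSemidef h2.posSemidef_sqrt
  have hpsd : (1 + Aᵀ * (1 + h2.sqrt)⁻¹ * A).PosSemidef := by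
    simpa using PosSemidef.one.add (hpd.inv.posSemidef.conjTranspose_mul_mul_same A)
  have hdet : IsUnit (1 + h2.sqrt).det := (isUnit_iff_isUnit_det _).mp hpd.isUnit
  exact (hpsd.eq_sqrt_of_sq_eq h1 (sq_one_add_mul_inv_one_add_mul h2.sqrt_mul_self hdet)).symm
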